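/- arXiv:1202.5107 — 3 statements merged into one kernel-verified Lean document; each statement's English description precedes it below -/
import Mathlib

section
/- Sokhotski–Plemelj formula: let φ : ℝ → ℂ be a Schwartz function. Then the principal-value limit PV∫ φ(x)/x dx := lim_{ε→0⁺} ∫_{|x| ≥ ε} φ(x)/x dx exists, and lim_{ε→0⁺} ∫_ℝ φ(x)/(x + iε) dx = PV∫ φ(x)/x dx − iπ·φ(0). -/
/-!
Put `ψ(x) = (φ(x) - φ(-x)) / (2x)`; it is integrable since `φ` is integrable and Lipschitz.
Averaging over `x ↦ -x` turns `φ(x)/x` against any even weight into `ψ` against the same weight,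
so `∫_{|x| ≥ ε} φ(x)/x = ∫_{|x| ≥ ε} ψ`, and `1/(x + iε) = (x - iε)/(x² + ε²)` gives
`∫ φ(x)/(x + iε) = ∫ ψ(x) x²/(x² + ε²) - i ∫ φ(x) ε/(x² + ε²)`. Both `ψ`-integrals tend to `∫ ψ`
by dominated convergence, and the substitution `x = εt` turns the Poisson-kernel integral into
`∫ φ(εt)/(1 + t²) dt → π φ(0)`.
-/

open MeasureTheory Filter Topology Set
open scoped BoundedContinuousFunction

noncomputable def symmDiffQuot (f : ℝ → ℂ) (x : ℝ) : ℂ := (f x - f (-x)) / (2 * x)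

theorem norm_symmDiffQuot (f : ℝ → ℂ) (x : ℝ) :
    ‖symmDiffQuot f x‖ = ‖f x - f (-x)‖ / (2 * |x|) := by
  simp [symmDiffQuot]

theorem LipschitzWith.norm_symmDiffQuot_le {f : ℝ → ℂ} {K : NNReal} (hf : LipschitzWith K f)
    (x : ℝ) : ‖symmDiffQuot f x‖ ≤ K := by
  rw [norm_symmDiffQuot]
  rcases eq_or_ne x 0 with rfl | hx
  · simp
  have h := hf.norm_sub_le x (-x)
  rw [sub_neg_eq_add, ← two_mul, norm_mul, Real.norm_two, Real.norm_eq_abs] at h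
  exact div_le_of_le_mul₀ (by positivity) K.coe_nonneg h

theorem LipschitzWith.integrable_symmDiffQuot {f : ℝ → ℂ} {K : NNReal} (hf : LipschitzWith K f)
    (hfi : Integrable f) : Integrable (symmDiffQuot f) := by
  have hmeas : AEStronglyMeasurable (symmDiffQuot f) := by
    have hfm := hf.continuous.measurable
    exact ((hfm.sub (hfm.comp measurable_neg)).div
      (measurable_const.mul Complex.measurable_ofReal)).aestronglyMeasurable
  refine Integrable.mono' (g := fun x => (Icc (-1) 1).indicator (fun _ => (K : ℝ)) x
    + (‖f x‖ + ‖f (-x)‖)) ?_ hmeas (ae_of_all _ fun x => ?_)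
  · exact ((integrable_indicator_iff measurableSet_Icc).2
      (integrableOn_const measure_Icc_lt_top.ne)).add (hfi.norm.add hfi.comp_neg.norm)
  by_cases hx : |x| ≤ 1
  · rw [indicator_of_mem (show x ∈ Icc (-1) 1 from abs_le.1 hx)]
    exact le_add_of_le_of_nonneg (hf.norm_symmDiffQuot_le x) (by positivity)
  · rw [indicator_of_notMem (show x ∉ Icc (-1) 1 from fun h => hx (abs_le.2 h)), zero_add,
      norm_symmDiffQuot]
    calc ‖f x - f (-x)‖ / (2 * |x|) ≤ ‖f x - f (-x)‖ := div_le_self (norm_nonneg _) (by linarith)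
      _ ≤ ‖f x‖ + ‖f (-x)‖ := _root_.norm_sub_le _ _

theorem SchwartzMap.lipschitzWith {E F : Type*} [NormedAddCommGroup E] [NormedSpace ℝ E]
    [NormedAddCommGroup F] [NormedSpace ℝ F] (f : SchwartzMap E F) :
    LipschitzWith (SchwartzMap.seminorm ℝ 0 1 f).toNNReal f :=
  lipschitzWith_of_nnnorm_fderiv_le f.differentiable fun x => by
    rw [← NNReal.coe_le_coe, coe_nnnorm, Real.coe_toNNReal _ (apply_nonneg _ _),
      ← norm_iteratedFDeriv_one]
    exact f.norm_iteratedFDeriv_le_seminorm ℝ 1 x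

theorem integral_smul_div_eq_integral_smul_symmDiffQuot {f : ℝ → ℂ} {m : ℝ → ℝ}
    (hm : ∀ x, m (-x) = m x) (hint : Integrable fun x => m x • (f x / x)) :
    ∫ x, m x • (f x / x) = ∫ x, m x • symmDiffQuot f x := by
  have hpt : ∀ x, m x • symmDiffQuot f x
      = (2 : ℂ)⁻¹ * (m x • (f x / x) + m (-x) • (f (-x) / ((-x : ℝ) : ℂ))) := by
    intro x
    simp only [symmDiffQuot, hm, Complex.real_smul]
    push_cast
    ring
  simp_rw [hpt]
  rw [integral_const_mul, integral_add hint hint.comp_neg,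
    integral_neg_eq_self (fun x => m x • (f x / x))]
  ring

theorem tendsto_integral_smul_of_tendsto_one {α ι E : Type*} [MeasurableSpace α] {μ : Measure α}
    [NormedAddCommGroup E] [NormedSpace ℝ E] {l : Filter ι} [l.IsCountablyGenerated]
    {g : α → E} (hg : Integrable g μ) {m : ι → α → ℝ}
    (hm_meas : ∀ᶠ i in l, AEStronglyMeasurable (m i) μ)
    (hm_le : ∀ᶠ i in l, ∀ᵐ x ∂μ, |m i x| ≤ 1)
    (hm_lim : ∀ᵐ x ∂μ, Tendsto (fun i => m i x) l (𝓝 1)) :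
    Tendsto (fun i => ∫ x, m i x • g x ∂μ) l (𝓝 (∫ x, g x ∂μ)) := by
  refine tendsto_integral_filter_of_dominated_convergence (fun x => ‖g x‖)
    (hm_meas.mono fun i hi => hi.smul hg.aestronglyMeasurable) ?_ hg.norm ?_
  · filter_upwards [hm_le] with i hi
    filter_upwards [hi] with x hx
    rw [norm_smul, Real.norm_eq_abs]
    exact mul_le_of_le_one_left (norm_nonneg _) hx
  · filter_upwards [hm_lim] with x hx
    simpa using hx.smul_const (g x)

theorem integral_poisson_smul_eq_integral_comp_mul {E : Type*} [NormedAddCommGroup E]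
    [NormedSpace ℝ E] (f : ℝ → E) {ε : ℝ} (hε : 0 < ε) :
    ∫ x, (ε / (x ^ 2 + ε ^ 2)) • f x = ∫ t, (1 + t ^ 2)⁻¹ • f (ε * t) := by
  have hpt : ∀ t : ℝ, (1 + t ^ 2)⁻¹ • f (ε * t)
      = ε • ((ε / ((ε * t) ^ 2 + ε ^ 2)) • f (ε * t)) := by
    intro t
    rw [smul_smul]
    congr 1
    field_simp
    ring
  simp_rw [hpt]
  rw [integral_smul, Measure.integral_comp_mul_left (fun x => (ε / (x ^ 2 + ε ^ 2)) • f x),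
    abs_of_pos (inv_pos.2 hε), smul_inv_smul₀ hε.ne']

theorem tendsto_integral_poisson_smul {E : Type*} [NormedAddCommGroup E] [NormedSpace ℝ E]
    [CompleteSpace E] (f : ℝ →ᵇ E) :
    Tendsto (fun ε : ℝ => ∫ x, (ε / (x ^ 2 + ε ^ 2)) • f x) (𝓝[>] 0) (𝓝 (Real.pi • f 0)) := by
  have hlim : Tendsto (fun ε : ℝ => ∫ t, (1 + t ^ 2)⁻¹ • f (ε * t)) (𝓝 0)
      (𝓝 (∫ t : ℝ, (1 + t ^ 2)⁻¹ • f 0)) := by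
    refine tendsto_integral_filter_of_dominated_convergence (fun t => (1 + t ^ 2)⁻¹ * ‖f‖)
      (Eventually.of_forall fun ε => by fun_prop) (Eventually.of_forall fun ε => ae_of_all _
        fun t => ?_) (integrable_inv_one_add_sq.mul_const _) (ae_of_all _ fun t => ?_)
    · rw [norm_smul, Real.norm_of_nonneg (by positivity)]
      gcongr
      exact f.norm_coe_le_norm _
    · have : Tendsto (fun ε : ℝ => ε * t) (𝓝 0) (𝓝 0) := by
        simpa using (continuous_mul_const t).tendsto 0
      exact ((f.continuous.tendsto 0).comp this).const_smul _
  rw [integral_smul_const, integral_univ_inv_one_add_sq] at hlim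
  exact (hlim.mono_left nhdsWithin_le_nhds).congr'
    (eventually_mem_nhdsWithin.mono fun ε hε =>
      (integral_poisson_smul_eq_integral_comp_mul f hε).symm)

theorem MeasureTheory.Integrable.integrableOn_div_of_le_abs {f : ℝ → ℂ} (hf : Integrable f)
    {ε : ℝ} (hε : 0 < ε) : IntegrableOn (fun x => f x / x) {x | ε ≤ |x|} := by
  simp_rw [div_eq_mul_inv]
  refine hf.integrableOn.mul_bdd (c := ε⁻¹) (by fun_prop) ?_
  filter_upwards [ae_restrict_mem (measurableSet_le measurable_const measurable_abs)] with x hx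
  rw [norm_inv, Complex.norm_real, Real.norm_eq_abs]
  exact inv_anti₀ hε hx

theorem tendsto_setIntegral_le_abs_div {f : ℝ → ℂ} (hf : Integrable f)
    (hsdq : Integrable (symmDiffQuot f)) :
    Tendsto (fun ε : ℝ => ∫ x in {x : ℝ | ε ≤ |x|}, f x / x) (𝓝[>] 0)
      (𝓝 (∫ x, symmDiffQuot f x)) := by
  set m : ℝ → ℝ → ℝ := fun ε => {x : ℝ | ε ≤ |x|}.indicator 1 with hm
  have hs (ε : ℝ) : MeasurableSet {x : ℝ | ε ≤ |x|} :=
    measurableSet_le measurable_const measurable_abs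
  have hind (ε x : ℝ) : {x : ℝ | ε ≤ |x|}.indicator (fun x => f x / x) x = m ε x • (f x / x) := by
    simp only [hm, indicator_apply]
    split_ifs <;> simp
  have hsym : ∀ ε > 0, ∫ x in {x : ℝ | ε ≤ |x|}, f x / x = ∫ x, m ε x • symmDiffQuot f x := by
    intro ε hε
    rw [← integral_indicator (hs ε)]
    simp_rw [hind]
    refine integral_smul_div_eq_integral_smul_symmDiffQuot
      (fun x => by simp [hm, indicator_apply]) ?_
    simp_rw [← hind]
    exact (integrable_indicator_iff (hs ε)).2 (hf.integrableOn_div_of_le_abs hε)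
  refine (tendsto_integral_smul_of_tendsto_one hsdq
    (Eventually.of_forall fun ε => (measurable_one.indicator (hs ε)).aestronglyMeasurable)
    (Eventually.of_forall fun ε => ae_of_all _ fun x => ?_) ?_).congr'
    (eventually_mem_nhdsWithin.mono fun ε hε => (hsym ε hε).symm)
  · simp only [indicator_apply]
    split_ifs <;> simp
  · filter_upwards [Measure.ae_ne volume 0] with x hx
    refine tendsto_const_nhds.congr' ?_
    filter_upwards [(eventually_le_nhds (abs_pos.2 hx)).filter_mono nhdsWithin_le_nhds]
      with ε hε
    simp [indicator_of_mem (show x ∈ {x : ℝ | ε ≤ |x|} from hε)]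

theorem integral_div_add_mul_I_eq {f : ℝ → ℂ} (hf : Integrable f) {ε : ℝ} (hε : 0 < ε) :
    ∫ x : ℝ, f x / (x + ε * Complex.I)
      = (∫ x, (x ^ 2 / (x ^ 2 + ε ^ 2)) • symmDiffQuot f x)
        - Complex.I * ∫ x, (ε / (x ^ 2 + ε ^ 2)) • f x := by
  have hpt (x : ℝ) : f x / (x + ε * Complex.I)
      = (x ^ 2 / (x ^ 2 + ε ^ 2)) • (f x / x) - Complex.I * ((ε / (x ^ 2 + ε ^ 2)) • f x) := by
    have hne : (x : ℂ) + ε * Complex.I ≠ 0 := fun h =>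
      hε.ne' (by simpa using congrArg Complex.im h)
    have hden : (x : ℂ) ^ 2 + (ε : ℂ) ^ 2 ≠ 0 := by
      exact_mod_cast (by positivity : x ^ 2 + ε ^ 2 ≠ 0)
    have hcancel : (x : ℂ) ^ 2 / (x ^ 2 + ε ^ 2) * (f x / x) = x * f x / (x ^ 2 + ε ^ 2) := by
      rcases eq_or_ne (x : ℂ) 0 with hx | hx
      · simp [hx]
      · field_simp
    simp only [Complex.real_smul]
    push_cast
    rw [hcancel, div_eq_iff hne]
    field_simp
    linear_combination (f x * ε ^ 2) * Complex.I_sq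
  have hint_full : Integrable fun x : ℝ => f x / (x + ε * Complex.I) := by
    simp_rw [div_eq_mul_inv]
    refine hf.mul_bdd (c := ε⁻¹)
      (Complex.continuous_ofReal.add continuous_const).measurable.inv.aestronglyMeasurable
      (ae_of_all _ fun x => ?_)
    rw [norm_inv]
    refine inv_anti₀ hε ?_
    simpa [abs_of_pos hε] using Complex.abs_im_le_norm ((x : ℂ) + ε * Complex.I)
  have hint_im : Integrable fun x : ℝ => (ε / (x ^ 2 + ε ^ 2)) • f x := by
    refine hf.bdd_smul ε⁻¹
      (by fun_prop : Measurable fun x : ℝ => ε / (x ^ 2 + ε ^ 2)).aestronglyMeasurable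
      (ae_of_all _ fun x => ?_)
    rw [Real.norm_of_nonneg (by positivity), div_le_iff₀ (by positivity)]
    field_simp
    nlinarith [sq_nonneg x]
  have hint_re : Integrable fun x : ℝ => (x ^ 2 / (x ^ 2 + ε ^ 2)) • (f x / x) :=
    (hint_full.add (hint_im.const_mul Complex.I)).congr (ae_of_all _ fun x => by simp [hpt])
  simp_rw [hpt]
  rw [integral_sub hint_re (hint_im.const_mul _), integral_const_mul,
    integral_smul_div_eq_integral_smul_symmDiffQuot (fun x => by rw [neg_sq]) hint_re]

theorem tendsto_integral_div_add_mul_I (f : ℝ →ᵇ ℂ) (hf : Integrable f)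
    (hsdq : Integrable (symmDiffQuot f)) :
    Tendsto (fun ε : ℝ => ∫ x : ℝ, f x / (x + ε * Complex.I)) (𝓝[>] 0)
      (𝓝 ((∫ x, symmDiffQuot f x) - Real.pi * Complex.I * f 0)) := by
  have hre : Tendsto (fun ε : ℝ => ∫ x, (x ^ 2 / (x ^ 2 + ε ^ 2)) • symmDiffQuot f x) (𝓝[>] 0)
      (𝓝 (∫ x, symmDiffQuot f x)) := by
    refine tendsto_integral_smul_of_tendsto_one hsdq (Eventually.of_forall fun ε =>
      (by fun_prop : Measurable fun x : ℝ => x ^ 2 / (x ^ 2 + ε ^ 2)).aestronglyMeasurable)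
      (Eventually.of_forall fun ε => ae_of_all _ fun x => ?_) ?_
    · rw [abs_of_nonneg (by positivity)]
      exact div_le_one_of_le₀ (le_add_of_nonneg_right (sq_nonneg ε)) (by positivity)
    · filter_upwards [Measure.ae_ne volume 0] with x hx
      have hcont : ContinuousAt (fun ε : ℝ => x ^ 2 / (x ^ 2 + ε ^ 2)) 0 :=
        continuousAt_const.div (by fun_prop) (by positivity)
      simpa [hx] using hcont.tendsto.mono_left nhdsWithin_le_nhds
  have him := (tendsto_integral_poisson_smul f).const_mul Complex.I
  rw [show (∫ x, symmDiffQuot f x) - Real.pi * Complex.I * f 0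
      = (∫ x, symmDiffQuot f x) - Complex.I * (Real.pi • f 0) by rw [Complex.real_smul]; ring]
  exact (hre.sub him).congr'
    (eventually_mem_nhdsWithin.mono fun ε hε => (integral_div_add_mul_I_eq hf hε).symm)

theorem stmt_5 (φ : SchwartzMap ℝ ℂ) :
    ∃ PV : ℂ,
      Tendsto (fun ε : ℝ => ∫ x in {x : ℝ | ε ≤ |x|}, φ x / (x : ℂ))
        (𝓝[>] 0) (𝓝 PV) ∧
      Tendsto (fun ε : ℝ => ∫ x : ℝ, φ x / ((x : ℂ) + ε * Complex.I))
        (𝓝[>] 0) (𝓝 (PV - Real.pi * Complex.I * φ 0)) := by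
  have hsdq := φ.lipschitzWith.integrable_symmDiffQuot φ.integrable
  exact ⟨_, tendsto_setIntegral_le_abs_div φ.integrable hsdq,
    tendsto_integral_div_add_mul_I φ.toBoundedContinuousFunction φ.integrable hsdq⟩
end

section
/- Boundary value of the complex logarithm: let φ : ℝ → ℂ be continuous with compact support. Then lim_{ε→0⁺} ∫_ℝ φ(x) · Log(x + iε) dx = ∫_ℝ φ(x) · log|x| dx + iπ · ∫_{(-∞,0)} φ(x) dx, where Log denotes the principal branch of the complex logarithm. In particular the distributional boundary value of Log(x + iε) as ε → 0⁺ is log|x| + iπ·Θ(−x), with Θ the Heaviside step function. -/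
/-!
Dominated convergence in `ε`. For `x ≠ 0` the path `x + iε` approaches `x` from the closed
upper half plane, on which `Log` is continuous at `x` (on the negative axis `arg x = π` is the
limit from above), so `Log (x + iε) → Log x`. For `0 < ε ≤ 1` we have `|x| ≤ |x + iε| ≤ |x| + 1`,
whence `‖Log (x + iε)‖ ≤ |log |x|| + |x| + 1 + π`, a locally integrable majorant. Finally
`Log x = log |x| + iπ · 1_{x < 0}` splits the limit integral.
-/

open MeasureTheory Filter Topology

theorem Real.abs_log_le_abs_log_add_of_le {a t : ℝ} (ha : 0 < a) (hat : a ≤ t) :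
    |Real.log t| ≤ |Real.log a| + t := by
  rcases le_or_gt t 1 with ht | ht
  · rw [abs_of_nonpos (Real.log_nonpos (ha.trans_le hat).le ht)]
    linarith [neg_le_abs (Real.log a), Real.log_le_log ha hat]
  · rw [abs_of_pos (Real.log_pos ht)]
    linarith [abs_nonneg (Real.log a), Real.log_le_sub_one_of_pos (ha.trans_le hat)]

theorem MeasureTheory.locallyIntegrable_of_forall_intervalIntegrable {E : Type*}
    [NormedAddCommGroup E] {f : ℝ → E} (hf : ∀ a b, IntervalIntegrable f volume a b) :
    LocallyIntegrable f volume := by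
  refine locallyIntegrable_iff.2 fun k hk => ?_
  obtain ⟨a, ha⟩ := hk.bddBelow
  obtain ⟨b, hb⟩ := hk.bddAbove
  exact ((intervalIntegrable_iff' enorm_ne_top).1 (hf a b)).mono_set
    fun x hx => Set.Icc_subset_uIcc ⟨ha hx, hb hx⟩

namespace Complex

open Set

theorem norm_log_le_abs_log_re_add {z : ℂ} (hz : z.re ≠ 0) :
    ‖log z‖ ≤ |Real.log z.re| + ‖z‖ + Real.pi := by
  have hlog_norm : |Real.log ‖z‖| ≤ |Real.log z.re| + ‖z‖ := by
    rw [← Real.log_abs z.re]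
    exact Real.abs_log_le_abs_log_add_of_le (abs_pos.2 hz) (abs_re_le_norm z)
  calc ‖log z‖ ≤ |(log z).re| + |(log z).im| := norm_le_abs_re_add_abs_im _
    _ ≤ |Real.log z.re| + ‖z‖ + Real.pi := by
      rw [log_re, log_im]
      linarith [abs_arg_le_pi z]

theorem norm_log_add_mul_I_le {x ε : ℝ} (hx : x ≠ 0) (hε : ε ∈ Ioc 0 1) :
    ‖log (x + ε * I)‖ ≤ |Real.log x| + (|x| + 1) + Real.pi := by
  have hre : ((x : ℂ) + ε * I).re = x := by simp
  have hnorm : ‖(x : ℂ) + ε * I‖ ≤ |x| + 1 := by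
    calc ‖(x : ℂ) + ε * I‖ ≤ ‖(x : ℂ)‖ + ‖(ε : ℂ) * I‖ := norm_add_le _ _
      _ = |x| + ε := by simp [abs_of_pos hε.1]
      _ ≤ |x| + 1 := by linarith [hε.2]
  calc ‖log (x + ε * I)‖ ≤ |Real.log x| + ‖(x : ℂ) + ε * I‖ + Real.pi := by
        simpa only [hre] using norm_log_le_abs_log_re_add (z := x + ε * I) (by rwa [hre])
    _ ≤ |Real.log x| + (|x| + 1) + Real.pi := by gcongr

theorem continuousWithinAt_log_ofReal_im_nonneg {x : ℝ} (hx : x ≠ 0) :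
    ContinuousWithinAt log {z : ℂ | 0 ≤ z.im} x := by
  rcases hx.lt_or_gt with hx | hx
  · exact continuousWithinAt_log_of_re_neg_of_im_zero (by simpa) (by simp)
  · exact (continuousAt_clog (ofReal_mem_slitPlane.2 hx)).continuousWithinAt

theorem tendsto_log_add_mul_I_nhdsGT {x : ℝ} (hx : x ≠ 0) :
    Tendsto (fun ε : ℝ => log (x + ε * I)) (𝓝[>] 0) (𝓝 (log x)) := by
  have hpath :
      Tendsto (fun ε : ℝ => (x : ℂ) + ε * I) (𝓝[>] 0) (𝓝[{z : ℂ | 0 ≤ z.im}] x) := by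
    refine tendsto_nhdsWithin_iff.2 ⟨?_, ?_⟩
    · have : Continuous fun ε : ℝ => (x : ℂ) + ε * I := by fun_prop
      simpa using this.continuousWithinAt.tendsto (s := Ioi 0) (x := 0)
    · filter_upwards [self_mem_nhdsWithin] with ε (hε : 0 < ε)
      simpa using hε.le
  exact (continuousWithinAt_log_ofReal_im_nonneg hx).tendsto.comp hpath

theorem log_ofReal_eq_log_abs_add_indicator (x : ℝ) :
    log (x : ℂ) = Real.log |x| + (Iio 0).indicator (fun _ => (Real.pi : ℂ) * I) x := by
  rw [log, norm_real, Real.norm_eq_abs]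
  rcases lt_or_ge x 0 with hx | hx
  · rw [arg_ofReal_of_neg hx, indicator_of_mem (mem_Iio.2 hx)]
  · rw [arg_ofReal_of_nonneg hx, indicator_of_notMem (notMem_Iio.2 hx)]
    simp

theorem integral_mul_log_ofReal {φ : ℝ → ℂ} (hφ : Integrable φ)
    (hφlog : Integrable fun x : ℝ => φ x * (Real.log |x| : ℂ)) :
    ∫ x : ℝ, φ x * log (x : ℂ) =
      (∫ x : ℝ, φ x * (Real.log |x| : ℂ)) + Real.pi * I * ∫ x in Iio (0 : ℝ), φ x := by
  have hsplit : ∀ x : ℝ, φ x * log (x : ℂ) =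
      φ x * (Real.log |x| : ℂ) + (Iio 0).indicator (fun y => (Real.pi : ℂ) * I * φ y) x := by
    intro x
    simp only [log_ofReal_eq_log_abs_add_indicator, indicator_apply]
    split_ifs <;> ring
  simp_rw [hsplit]
  rw [integral_add hφlog ((hφ.const_mul _).indicator measurableSet_Iio),
    integral_indicator measurableSet_Iio, integral_const_mul]

end Complex

open Complex

theorem HasCompactSupport.integrable_norm_mul_abs_log_add {E : Type*} [NormedAddCommGroup E]
    {φ : ℝ → E} (hc : Continuous φ) (hs : HasCompactSupport φ) :
    Integrable fun x => ‖φ x‖ * (|Real.log x| + (|x| + 1) + Real.pi) := by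
  refine LocallyIntegrable.integrable_smul_left_of_hasCompactSupport ?_ hc.norm hs.norm
  exact locallyIntegrable_of_forall_intervalIntegrable fun a b =>
    (intervalIntegral.intervalIntegrable_log'.abs.add
      ((by fun_prop : Continuous fun x : ℝ => |x| + 1).intervalIntegrable a b)).add
      intervalIntegrable_const

theorem tendsto_integral_mul_log_add_mul_I {φ : ℝ → ℂ} (hc : Continuous φ)
    (hs : HasCompactSupport φ) :
    Tendsto (fun ε : ℝ => ∫ x : ℝ, φ x * log (x + ε * I)) (𝓝[>] 0)
      (𝓝 (∫ x : ℝ, φ x * log (x : ℂ))) := by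
  refine tendsto_integral_filter_of_dominated_convergence _
    (Eventually.of_forall fun ε => ?_) ?_ (hs.integrable_norm_mul_abs_log_add hc) ?_
  · exact hc.aestronglyMeasurable.mul (measurable_log.comp (by fun_prop)).aestronglyMeasurable
  · filter_upwards [Ioc_mem_nhdsGT zero_lt_one] with ε hε
    filter_upwards [Measure.ae_ne volume 0] with x hx
    rw [norm_mul]
    exact mul_le_mul_of_nonneg_left (norm_log_add_mul_I_le hx hε) (norm_nonneg _)
  · filter_upwards [Measure.ae_ne volume 0] with x hx
    exact tendsto_const_nhds.mul (tendsto_log_add_mul_I_nhdsGT hx)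

theorem stmt_6 (φ : ℝ → ℂ) (hc : Continuous φ) (hs : HasCompactSupport φ) :
    Tendsto (fun ε : ℝ => ∫ x : ℝ, φ x * Complex.log ((x : ℂ) + ε * Complex.I))
      (𝓝[>] 0)
      (𝓝 ((∫ x : ℝ, φ x * (Real.log |x| : ℂ)) +
        Real.pi * Complex.I * ∫ x in Set.Iio (0 : ℝ), φ x)) := by
  have hφlog : Integrable fun x : ℝ => φ x * (Real.log |x| : ℂ) := by
    refine (hs.integrable_norm_mul_abs_log_add hc).mono'
      (hc.aestronglyMeasurable.mul ?_) (Eventually.of_forall fun x => ?_)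
    · exact (measurable_ofReal.comp (Real.measurable_log.comp measurable_abs)).aestronglyMeasurable
    rw [norm_mul, norm_real, Real.norm_eq_abs, Real.log_abs]
    exact mul_le_mul_of_nonneg_left (by linarith [abs_nonneg x, Real.pi_pos]) (norm_nonneg _)
  rw [← integral_mul_log_ofReal (hc.integrable_of_hasCompactSupport hs) hφlog]
  exact tendsto_integral_mul_log_add_mul_I hc hs
end

section
/- Multivariate Gaussian integral: let P be an n×n real symmetric positive-definite matrix. Then the function x ↦ exp(−(1/2) ⟨x, P x⟩) is integrable on ℝⁿ and ∫_{ℝⁿ} exp(−(1/2) xᵀ P x) dx = (2π)^{n/2} (det P)^{−1/2}. (In particular det P > 0, so the right-hand side is well defined.) -/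
/-!
In an orthonormal eigenbasis of `P` the quadratic form becomes `∑ λᵢ yᵢ²`, and the change of
coordinates is a linear isometry, hence preserves Lebesgue measure. The integrand then factors into
one-dimensional Gaussians `exp (-λᵢ yᵢ² / 2)`, each integrating to `√(2π / λᵢ)`, and the product of
the eigenvalues is `det P`.
-/

open MeasureTheory Real
open scoped Matrix RealInnerProductSpace

variable {ι : Type*} [Fintype ι]

namespace EuclideanSpace

variable {𝕜 : Type*} [RCLike 𝕜]

theorem integrable_prod {f : ι → ℝ → 𝕜} (hf : ∀ i, Integrable (f i)) :
    Integrable fun y : EuclideanSpace ℝ ι => ∏ i, f i (y i) :=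
  ((PiLp.volume_preserving_toLp ι).integrable_comp_emb
    (MeasurableEquiv.toLp 2 _).measurableEmbedding).mp (Integrable.fintype_prod hf)

theorem integral_prod (f : ι → ℝ → 𝕜) :
    ∫ y : EuclideanSpace ℝ ι, ∏ i, f i (y i) = ∏ i, ∫ t, f i t := by
  rw [← (PiLp.volume_preserving_toLp ι).integral_comp' (f := MeasurableEquiv.toLp 2 _)]
  exact integral_fintype_prod_volume_eq_prod (fun i => f i)

theorem exp_neg_sum_mul_sq (c : ι → ℝ) (y : EuclideanSpace ℝ ι) :
    exp (-∑ i, c i * y i ^ 2) = ∏ i, exp (-c i * y i ^ 2) := by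
  simp only [← exp_sum, neg_mul, Finset.sum_neg_distrib]

theorem integrable_exp_neg_sum_mul_sq {c : ι → ℝ} (hc : ∀ i, 0 < c i) :
    Integrable fun y : EuclideanSpace ℝ ι => exp (-∑ i, c i * y i ^ 2) := by
  simpa only [exp_neg_sum_mul_sq] using
    integrable_prod (f := fun i t => exp (-c i * t ^ 2)) fun i => integrable_exp_neg_mul_sq (hc i)

theorem integral_exp_neg_sum_mul_sq (c : ι → ℝ) :
    ∫ y : EuclideanSpace ℝ ι, exp (-∑ i, c i * y i ^ 2) = ∏ i, √(π / c i) := by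
  simp only [exp_neg_sum_mul_sq, integral_prod (fun i t => exp (-c i * t ^ 2)), integral_gaussian]

end EuclideanSpace

theorem prod_sqrt_pi_div_half {c : ι → ℝ} (hc : ∀ i, 0 < c i) :
    ∏ i, √(π / (c i / 2)) = (2 * π) ^ ((Fintype.card ι : ℝ) / 2) * (∏ i, c i) ^ (-(1 / 2) : ℝ) := by
  have h (i : ι) : √(π / (c i / 2)) = (2 * π) ^ (1 / 2 : ℝ) * c i ^ (-(1 / 2) : ℝ) := by
    rw [show π / (c i / 2) = 2 * π * (c i)⁻¹ by ring, sqrt_eq_rpow,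
      mul_rpow (by positivity) (inv_nonneg.2 (hc i).le), rpow_neg (hc i).le, inv_rpow (hc i).le]
  rw [Finset.prod_congr rfl fun i _ => h i, Finset.prod_mul_distrib, Finset.prod_const,
    Real.finsetProd_rpow _ _ fun i _ => (hc i).le, Finset.card_univ, ← rpow_natCast,
    ← rpow_mul (by positivity)]
  ring_nf

namespace Matrix

theorem sum_sum_mul_mul_eq_dotProduct_mulVec {R : Type*} [CommSemiring R] (P : Matrix ι ι R)
    (x : ι → R) : ∑ i, ∑ j, x i * P i j * x j = x ⬝ᵥ P *ᵥ x := by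
  simp only [dotProduct, mulVec, Finset.mul_sum, mul_assoc]

variable [DecidableEq ι] {P : Matrix ι ι ℝ}

theorem IsHermitian.dotProduct_mulVec_eq_sum_eigenvalues (hP : P.IsHermitian)
    (x : EuclideanSpace ℝ ι) :
    x.ofLp ⬝ᵥ P *ᵥ x.ofLp = ∑ i, hP.eigenvalues i * hP.eigenvectorBasis.repr x i ^ 2 := by
  set b := hP.eigenvectorBasis
  have hT : (toEuclideanLin P).IsSymmetric := isSymmetric_toEuclideanLin_iff.mpr hP
  have heig (i : ι) : toEuclideanLin P (b i) = hP.eigenvalues i • b i := by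
    ext1 j; simpa using congrFun (hP.mulVec_eigenvectorBasis i) j
  have hrepr (i : ι) : b.repr (toEuclideanLin P x) i = hP.eigenvalues i * b.repr x i := by
    rw [b.repr_apply_apply, b.repr_apply_apply, ← hT, heig, real_inner_smul_left]
  calc x.ofLp ⬝ᵥ P *ᵥ x.ofLp = ⟪x, toEuclideanLin P x⟫ := by
        simp [EuclideanSpace.inner_eq_star_dotProduct, dotProduct_comm]
    _ = ⟪b.repr x, b.repr (toEuclideanLin P x)⟫ := (b.repr.inner_map_map _ _).symm
    _ = ∑ i, hP.eigenvalues i * b.repr x i ^ 2 := by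
        simp only [PiLp.inner_apply, hrepr, Real.inner_apply]
        exact Finset.sum_congr rfl fun i _ => by ring

theorem IsHermitian.exp_neg_half_dotProduct_mulVec (hP : P.IsHermitian) (x : EuclideanSpace ℝ ι) :
    Real.exp (-(1 / 2) * (x.ofLp ⬝ᵥ P *ᵥ x.ofLp)) =
      Real.exp (-∑ i, hP.eigenvalues i / 2 * hP.eigenvectorBasis.repr x i ^ 2) := by
  rw [hP.dotProduct_mulVec_eq_sum_eigenvalues, Finset.mul_sum, ← Finset.sum_neg_distrib]
  congr 1
  exact Finset.sum_congr rfl fun i _ => by ring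

namespace PosDef

theorem integrable_exp_neg_half_dotProduct_mulVec (hP : P.PosDef) :
    Integrable fun x : EuclideanSpace ℝ ι => Real.exp (-(1 / 2) * (x.ofLp ⬝ᵥ P *ᵥ x.ofLp)) := by
  simp only [hP.isHermitian.exp_neg_half_dotProduct_mulVec]
  exact (integrable_comp hP.isHermitian.eigenvectorBasis.repr
      fun y => Real.exp (-∑ i, hP.isHermitian.eigenvalues i / 2 * y i ^ 2)).mpr
    (EuclideanSpace.integrable_exp_neg_sum_mul_sq fun i => half_pos (hP.eigenvalues_pos i))

theorem integral_exp_neg_half_dotProduct_mulVec (hP : P.PosDef) :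
    ∫ x : EuclideanSpace ℝ ι, Real.exp (-(1 / 2) * (x.ofLp ⬝ᵥ P *ᵥ x.ofLp)) =
      (2 * π) ^ ((Fintype.card ι : ℝ) / 2) * P.det ^ (-(1 / 2) : ℝ) := by
  simp only [hP.isHermitian.exp_neg_half_dotProduct_mulVec]
  rw [integral_comp hP.isHermitian.eigenvectorBasis.repr
      (fun y => Real.exp (-∑ i, hP.isHermitian.eigenvalues i / 2 * y i ^ 2)),
    EuclideanSpace.integral_exp_neg_sum_mul_sq, prod_sqrt_pi_div_half hP.eigenvalues_pos,
    hP.isHermitian.det_eq_prod_eigenvalues]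
  simp only [RCLike.ofReal_real_eq_id, id]

end PosDef

end Matrix

theorem stmt_10 {n : ℕ} (P : Matrix (Fin n) (Fin n) ℝ)
    (hsym : P.IsSymm)
    (hpos : ∀ x : EuclideanSpace ℝ (Fin n), x ≠ 0 → 0 < ∑ i, ∑ j, x i * P i j * x j) :
    Integrable
      (fun x : EuclideanSpace ℝ (Fin n) =>
        Real.exp (-(1 / 2) * ∑ i, ∑ j, x i * P i j * x j)) ∧
    (∫ x : EuclideanSpace ℝ (Fin n),
        Real.exp (-(1 / 2) * ∑ i, ∑ j, x i * P i j * x j))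
      = (2 * Real.pi) ^ ((n : ℝ) / 2) * P.det ^ (-(1 / 2) : ℝ) ∧
    0 < P.det := by
  have hP : P.PosDef := Matrix.posDef_iff_dotProduct_mulVec.mpr
    ⟨Matrix.isHermitian_iff_isSymm.mpr hsym, fun x hx => by
      simpa [Matrix.sum_sum_mul_mul_eq_dotProduct_mulVec] using
        hpos (WithLp.toLp 2 x) (by simpa using hx)⟩
  simp only [Matrix.sum_sum_mul_mul_eq_dotProduct_mulVec]
  refine ⟨hP.integrable_exp_neg_half_dotProduct_mulVec, ?_, hP.det_pos⟩
  simpa using hP.integral_exp_neg_half_dotProduct_mulVec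
end
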